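/- arXiv:2305.14342 — 2 statements merged into one kernel-verified Lean document; each statement's English description precedes it below -/
import Mathlib

section
/- Let L: ℝ^d → ℝ be twice continuously differentiable and strictly convex with minimizer θ*. For any initial point θ, the ODE dθ(t)/dt = -(∇²L(θ(t)))⁻¹ ∇L(θ) with θ(0) = θ has a solution on [0,1], and along this solution ∇L(θ(t)) = (1-t)∇L(θ) for all t ∈ [0,1], and θ(1) = θ*. -/
/-!
Along a solution, `d/dt ∇L(θ(t)) = ∇²L(θ(t)) θ'(t) = -∇L(θ)`, so the curve must be
`θ(t) = (∇L)⁻¹((1 - t) ∇L(θ))`, and this curve does solve the ODE. It is well defined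
because `∇L` is injective (strict convexity) and its range is convex, hence contains the
segment from `∇L(θ)` to `∇L(θ*) = 0`: tilting `L` by a convex combination of two gradients
gives the same convex combination of two tilts, each strictly convex with a minimizer and
hence coercive, so it attains its minimum, where its gradient vanishes. Since `∇L` is `C¹`
with invertible derivative `∇²L`, the inverse function theorem makes the curve differentiable.
-/

open Set Filter Topology Function
open scoped InnerProductSpace

section ConvexOn

variable {E : Type*} [NormedAddCommGroup E] [NormedSpace ℝ E] {f : E → ℝ} {a x : E}

theorem ConvexOn.isMinOn_of_hasFDerivAt_eq_zero (hf : ConvexOn ℝ univ f)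
    (h : HasFDerivAt f (0 : E →L[ℝ] ℝ) x) : IsMinOn f univ x := by
  intro y _
  let ℓ : ℝ →ᵃ[ℝ] E := AffineMap.lineMap x y
  have hline : ConvexOn ℝ univ (f ∘ ℓ) := by simpa using hf.comp_affineMap ℓ
  have hderiv : HasDerivAt (f ∘ ℓ) 0 0 := by
    have h0 : HasFDerivAt f (0 : E →L[ℝ] ℝ) (ℓ 0) := by simpa [ℓ] using h
    simpa using h0.comp_hasDerivAt (0 : ℝ) AffineMap.hasDerivAt_lineMap
  simpa [slope_def_field, ℓ] using
    hline.le_slope_of_hasDerivAt (mem_univ 0) (mem_univ 1) one_pos hderiv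

theorem ConvexOn.mul_dist_le_sub {m : ℝ} (hf : ConvexOn ℝ univ f)
    (hm : ∀ w ∈ Metric.sphere a 1, m ≤ f w - f a) (hx : 1 ≤ dist x a) :
    m * dist x a ≤ f x - f a := by
  set r := dist x a
  have hr : 0 < r := one_pos.trans_le hx
  have hr' : r⁻¹ ≤ 1 := inv_le_one_of_one_le₀ hx
  set w := (1 - r⁻¹) • a + r⁻¹ • x
  have hw : w ∈ Metric.sphere a 1 := by
    have : w - a = r⁻¹ • (x - a) := by simp only [w]; module
    rw [Metric.mem_sphere, dist_eq_norm, this, norm_smul, ← dist_eq_norm, Real.norm_eq_abs,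
      abs_of_pos (inv_pos.2 hr), inv_mul_cancel₀ hr.ne']
  have hconv : f w ≤ (1 - r⁻¹) * f a + r⁻¹ * f x :=
    hf.2 (mem_univ a) (mem_univ x) (sub_nonneg.2 hr') (inv_nonneg.2 hr.le) (by ring)
  have key : m ≤ r⁻¹ * (f x - f a) := by linarith [hm w hw]
  calc m * r ≤ r⁻¹ * (f x - f a) * r := by gcongr
    _ = f x - f a := by field_simp

theorem StrictConvexOn.tendsto_cocompact_atTop [ProperSpace E] (hf : StrictConvexOn ℝ univ f)
    (hc : Continuous f) (ha : IsMinOn f univ a) : Tendsto f (cocompact E) atTop := by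
  cases subsingleton_or_nontrivial E
  · simp [cocompact_eq_bot]
  obtain ⟨u, hu, humin⟩ := (isCompact_sphere a 1).exists_isMinOn
    (NormedSpace.sphere_nonempty.2 zero_le_one) hc.continuousOn
  have hua : f a < f u := by
    refine (ha (mem_univ u)).lt_of_ne fun h => ?_
    have : u = a := hf.eq_of_isMinOn (fun z _ => h ▸ ha (mem_univ z)) ha (mem_univ u) (mem_univ a)
    simp [this] at hu
  have hdist := tendsto_dist_right_cocompact_atTop a
  refine tendsto_atTop_mono' _ ?_ (tendsto_atTop_add_const_left _ (f a)
    (hdist.const_mul_atTop (sub_pos.2 hua)))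
  filter_upwards [hdist.eventually_ge_atTop 1] with x hx
  have := hf.convexOn.mul_dist_le_sub (fun w hw => sub_le_sub_right (humin hw) (f a)) hx
  linarith

end ConvexOn

section Gradient

variable {E : Type*} [NormedAddCommGroup E] [InnerProductSpace ℝ E] {f : E → ℝ} {f' : E → E}
  {g x : E}

theorem ConvexOn.sub_inner (hf : ConvexOn ℝ univ f) (u : E) :
    ConvexOn ℝ univ (fun y => f y - ⟪u, y⟫_ℝ) :=
  hf.sub ((innerₛₗ ℝ u).concaveOn convex_univ)

theorem StrictConvexOn.sub_inner (hf : StrictConvexOn ℝ univ f) (u : E) :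
    StrictConvexOn ℝ univ (fun y => f y - ⟪u, y⟫_ℝ) :=
  hf.sub_concaveOn ((innerₛₗ ℝ u).concaveOn convex_univ)

variable [CompleteSpace E]

theorem HasGradientAt.sub_inner (h : HasGradientAt f g x) (u : E) :
    HasGradientAt (fun y => f y - ⟪u, y⟫_ℝ) (g - u) x := by
  rw [hasGradientAt_iff_hasFDerivAt, map_sub]
  exact h.hasFDerivAt.sub (InnerProductSpace.toDual ℝ E u).hasFDerivAt

theorem IsLocalMin.hasGradientAt_eq_zero (hmin : IsLocalMin f x) (h : HasGradientAt f g x) :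
    g = 0 :=
  (InnerProductSpace.toDual ℝ E).map_eq_zero_iff.1 (hmin.hasFDerivAt_eq_zero h.hasFDerivAt)

theorem ConvexOn.isMinOn_sub_inner_of_hasGradientAt (hf : ConvexOn ℝ univ f)
    (h : HasGradientAt f g x) : IsMinOn (fun y => f y - ⟪g, y⟫_ℝ) univ x := by
  refine (hf.sub_inner g).isMinOn_of_hasFDerivAt_eq_zero ?_
  simpa using (h.sub_inner g).hasFDerivAt

theorem StrictConvexOn.injective_of_hasGradientAt (hf : StrictConvexOn ℝ univ f)
    (hgrad : ∀ x, HasGradientAt f (f' x) x) : Injective f' := by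
  intro x y hxy
  have hy := hf.convexOn.isMinOn_sub_inner_of_hasGradientAt (hgrad y)
  rw [← hxy] at hy
  exact (hf.sub_inner (f' x)).eq_of_isMinOn
    (hf.convexOn.isMinOn_sub_inner_of_hasGradientAt (hgrad x)) hy (mem_univ x) (mem_univ y)

theorem StrictConvexOn.convex_range_of_hasGradientAt [ProperSpace E]
    (hf : StrictConvexOn ℝ univ f) (hgrad : ∀ x, HasGradientAt f (f' x) x) :
    Convex ℝ (range f') := by
  rintro _ ⟨a, rfl⟩ _ ⟨b, rfl⟩ s t hs ht hst
  have hc : Continuous f := continuous_iff_continuousAt.2 fun x => (hgrad x).continuousAt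
  have htilt : ∀ u : E, Continuous fun y => f y - ⟪u, y⟫_ℝ := fun u => by fun_prop
  have hcoer : ∀ z, Tendsto (fun y => f y - ⟪f' z, y⟫_ℝ) (cocompact E) atTop := fun z =>
    (hf.sub_inner (f' z)).tendsto_cocompact_atTop (htilt _)
      (hf.convexOn.isMinOn_sub_inner_of_hasGradientAt (hgrad z))
  set u := s • f' a + t • f' b
  have hsplit : ∀ y, f y - ⟪u, y⟫_ℝ =
      s * (f y - ⟪f' a, y⟫_ℝ) + t * (f y - ⟪f' b, y⟫_ℝ) := fun y => by
    simp only [u, inner_add_left, real_inner_smul_left]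
    linear_combination (-f y) * hst
  have hcoer_u : Tendsto (fun y => f y - ⟪u, y⟫_ℝ) (cocompact E) atTop := by
    refine tendsto_atTop.2 fun c => ?_
    filter_upwards [tendsto_atTop.1 (hcoer a) c, tendsto_atTop.1 (hcoer b) c] with y ha hb
    calc c = s * c + t * c := by linear_combination (-c) * hst
      _ ≤ _ := by gcongr
      _ = _ := (hsplit y).symm
  obtain ⟨x, hx⟩ := (htilt u).exists_forall_le hcoer_u
  have hx0 := ((isMinOn_univ_iff.2 hx).isLocalMin univ_mem).hasGradientAt_eq_zero
    ((hgrad x).sub_inner u)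
  exact ⟨x, sub_eq_zero.1 hx0⟩

theorem ContDiff.contDiff_of_hasGradientAt {m n : WithTop ℕ∞} (hf : ContDiff ℝ n f)
    (hmn : m + 1 ≤ n) (hgrad : ∀ x, HasGradientAt f (f' x) x) : ContDiff ℝ m f' := by
  have hf' : f' = (InnerProductSpace.toDual ℝ E).symm ∘ fderiv ℝ f := funext fun x => by
    simp [(hgrad x).hasFDerivAt.fderiv]
  rw [hf']
  exact (InnerProductSpace.toDual ℝ E).symm.toContinuousLinearEquiv.contDiff.comp
    (hf.fderiv_right hmn)

end Gradient

section InverseFunction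

variable {𝕜 : Type*} [NontriviallyNormedField 𝕜] {E F : Type*} [NormedAddCommGroup E]
  [NormedSpace 𝕜 E] [CompleteSpace E] [Nonempty E] [NormedAddCommGroup F] [NormedSpace 𝕜 F]
  {f : E → F} {f' : E ≃L[𝕜] F} {x : E}

theorem HasStrictFDerivAt.hasFDerivAt_invFun (hinj : Injective f)
    (hf : HasStrictFDerivAt f (f' : E →L[𝕜] F) x) :
    HasFDerivAt (invFun f) (f'.symm : F →L[𝕜] E) (f x) := by
  refine hf.to_localInverse.hasFDerivAt.congr_of_eventuallyEq ?_
  filter_upwards [hf.eventually_right_inverse] with y hy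
  exact hinj ((invFun_eq ⟨_, hy⟩).trans hy.symm)

theorem HasStrictFDerivAt.hasDerivAt_invFun_comp (hinj : Injective f)
    (hf : HasStrictFDerivAt f (f' : E →L[𝕜] F) x) {c : 𝕜 → F} {c' : F} {t : 𝕜}
    (hc : HasDerivAt c c' t) (hct : c t = f x) :
    HasDerivAt (fun s => invFun f (c s)) (f'.symm c') t :=
  (hct ▸ hf.hasFDerivAt_invFun hinj).comp_hasDerivAt t hc

end InverseFunction

namespace Matrix

variable {n : Type*} [Fintype n] [DecidableEq n] {𝕜 : Type*} [RCLike 𝕜]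

noncomputable def toEuclideanCLEOfIsUnitDet (A : Matrix n n 𝕜) (hA : IsUnit A.det) :
    EuclideanSpace 𝕜 n ≃L[𝕜] EuclideanSpace 𝕜 n :=
  ContinuousLinearEquiv.unitsEquiv 𝕜 _
    (Units.map (toEuclideanCLM (n := n) (𝕜 := 𝕜)) (nonsingInvUnit A hA))

theorem coe_toEuclideanCLEOfIsUnitDet (A : Matrix n n 𝕜) (hA : IsUnit A.det) :
    (toEuclideanCLEOfIsUnitDet A hA : EuclideanSpace 𝕜 n →L[𝕜] EuclideanSpace 𝕜 n) =
      (toEuclideanLin A).toContinuousLinearMap := rfl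

theorem toEuclideanCLEOfIsUnitDet_symm_apply (A : Matrix n n 𝕜) (hA : IsUnit A.det)
    (v : EuclideanSpace 𝕜 n) :
    (toEuclideanCLEOfIsUnitDet A hA).symm v = toEuclideanLin A⁻¹ v := rfl

end Matrix

/-- The Newton-flow-type ODE `dθ(t)/dt = -(∇²L(θ(t)))⁻¹ ∇L(θ(0))` with `θ(0) = θ` has a
solution on `[0,1]`, along which `∇L(θ(t)) = (1-t) ∇L(θ)`, and `θ(1) = θ*`. -/
theorem sophia_soln_existence_mirror_ode
    (d : ℕ)
    (L : EuclideanSpace ℝ (Fin d) → ℝ)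
    (grad : EuclideanSpace ℝ (Fin d) → EuclideanSpace ℝ (Fin d))
    (hess : EuclideanSpace ℝ (Fin d) → Matrix (Fin d) (Fin d) ℝ)
    (hC2 : ContDiff ℝ 2 L)
    (hgrad : ∀ θ, HasGradientAt L (grad θ) θ)
    (hhess : ∀ θ, HasFDerivAt grad ((Matrix.toEuclideanLin (hess θ)).toContinuousLinearMap) θ)
    (hconv : StrictConvexOn ℝ Set.univ L)
    (hpd : ∀ θ, (hess θ).PosDef)
    (θstar : EuclideanSpace ℝ (Fin d))
    (hmin : ∀ θ, L θstar ≤ L θ)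
    (θ : EuclideanSpace ℝ (Fin d)) :
    ∃ γ : ℝ → EuclideanSpace ℝ (Fin d),
      γ 0 = θ ∧
      (∀ t ∈ Set.Icc (0 : ℝ) 1,
        HasDerivAt γ (-(Matrix.toEuclideanLin (hess (γ t))⁻¹ (grad θ))) t) ∧
      (∀ t ∈ Set.Icc (0 : ℝ) 1, grad (γ t) = (1 - t) • grad θ) ∧
      γ 1 = θstar := by
  have hinj : Injective grad := hconv.injective_of_hasGradientAt hgrad
  have hstar : grad θstar = 0 :=
    ((isMinOn_univ_iff.2 hmin).isLocalMin univ_mem).hasGradientAt_eq_zero (hgrad θstar)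
  have hrange : ∀ t ∈ Icc (0 : ℝ) 1, (1 - t) • grad θ ∈ range grad := fun t ht => by
    simpa [hstar] using hconv.convex_range_of_hasGradientAt hgrad ⟨θ, rfl⟩ ⟨θstar, rfl⟩
      (sub_nonneg.2 ht.2) ht.1 (sub_add_cancel 1 t)
  set γ : ℝ → EuclideanSpace ℝ (Fin d) := fun t => invFun grad ((1 - t) • grad θ)
  have hγ : ∀ t ∈ Icc (0 : ℝ) 1, grad (γ t) = (1 - t) • grad θ := fun t ht =>
    invFun_eq (hrange t ht)
  refine ⟨γ, hinj (by simp [hγ 0]), fun t ht => ?_, hγ, hinj (by simp [hγ 1, hstar])⟩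
  have hdet : IsUnit (hess (γ t)).det := (Matrix.isUnit_iff_isUnit_det _).1 (hpd (γ t)).isUnit
  have hstrict : HasStrictFDerivAt grad
      ((hess (γ t)).toEuclideanCLEOfIsUnitDet hdet : _ →L[ℝ] _) (γ t) := by
    rw [Matrix.coe_toEuclideanCLEOfIsUnitDet]
    exact ((hC2.contDiff_of_hasGradientAt le_rfl hgrad).contDiffAt).hasStrictFDerivAt' (hhess _)
      one_ne_zero
  simpa [Matrix.toEuclideanCLEOfIsUnitDet_symm_apply] using
    hstrict.hasDerivAt_invFun_comp hinj (((hasDerivAt_id t).const_sub 1).smul_const (grad θ))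
      (hγ t ht).symm
end

section
/- Descent lemma for clipped Newton updates: let ∇²L(θ) = Vᵀ Σ V be an eigendecomposition with V orthogonal, Σ = diag(σ₁,…,σ_d), and let v_i be the i-th row of V. For any η, ρ > 0 with ηρ ≤ R/√d, the update θ₊ = θ - η Vᵀ clip(V(∇²L(θ))⁻¹∇L(θ), ρ) (clipping coordinatewise to [-ρ, ρ]) satisfies L(θ₊) - L(θ) ≤ -(η - η²) Σ_{i=1}^d min{ρ|v_iᵀ∇L(θ)|, σ_i⁻¹|v_iᵀ∇L(θ)|²}. -/
/-!
Write `H = ∇²L(θ)` and `v = η Vᵀ c` for the step, where `u = V ∇L(θ)` and `c = clip(Σ⁻¹ u, ρ)`.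
Since `‖v‖ = η ‖c‖ ≤ η ρ √d ≤ R`, the hypothesis on `H⁻¹ ∇²L(θ')` holds along the whole segment;
as `H^{-1/2} ∇²L(θ') H^{-1/2}` is self-adjoint with the same spectrum as `H⁻¹ ∇²L(θ')`, it gives
`∇²L(θ') ≤ 2 H` in the Loewner order. A second-order Taylor bound along the segment then yields
`L(θ - v) - L(θ) ≤ -⟪∇L(θ), v⟫ + ⟪H v, v⟫ = -η ∑ uᵢ cᵢ + η² ∑ σᵢ cᵢ²`.
Finally `cᵢ` lies between `0` and `uᵢ / σᵢ`, so `σᵢ cᵢ² ≤ uᵢ cᵢ = min (ρ |uᵢ|) (|uᵢ|² / σᵢ)`.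
-/

open scoped InnerProductSpace
open Matrix
noncomputable section

def clipVec {d : ℕ} (ρ : ℝ) (z : EuclideanSpace ℝ (Fin d)) : EuclideanSpace ℝ (Fin d) :=
  (WithLp.equiv 2 (Fin d → ℝ)).symm fun i => max (min (z i) ρ) (-ρ)

open Set
open scoped RealInnerProductSpace

theorem le_add_deriv_mul_add_of_deriv2_le {f f' f'' : ℝ → ℝ} {a b M : ℝ} (hab : a ≤ b)
    (hf : ∀ t, HasDerivAt f (f' t) t) (hf' : ∀ t, HasDerivAt f' (f'' t) t)
    (hM : ∀ t ∈ Icc a b, f'' t ≤ M) :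
    f b ≤ f a + f' a * (b - a) + M / 2 * (b - a) ^ 2 := by
  have hslope : ∀ t ∈ Icc a b, f' t - f' a ≤ M * (t - a) := fun t ht =>
    (convex_Icc a b).image_sub_le_mul_sub_of_deriv_le
      (fun t _ => (hf' t).continuousAt.continuousWithinAt)
      (fun t _ => (hf' t).differentiableAt.differentiableWithinAt)
      (fun t ht => (hf' t).deriv ▸ hM t (interior_subset ht)) a (left_mem_Icc.mpr hab) t ht ht.1
  set g : ℝ → ℝ := fun t => f t - f' a * t - M / 2 * (t - a) ^ 2
  have hg : ∀ t, HasDerivAt g (f' t - f' a - M * (t - a)) t := fun t => by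
    refine (((hf t).sub ((hasDerivAt_id t).const_mul (f' a))).sub
      ((((hasDerivAt_id t).sub_const a).pow 2).const_mul (M / 2))).congr_deriv ?_
    simp only [id_eq, mul_one]; ring
  have := (convex_Icc a b).image_sub_le_mul_sub_of_deriv_le (f := g) (C := 0)
    (fun t _ => (hg t).continuousAt.continuousWithinAt)
    (fun t _ => (hg t).differentiableAt.differentiableWithinAt)
    (fun t ht => by rw [(hg t).deriv]; linarith [hslope t (interior_subset ht)])
    a (left_mem_Icc.mpr hab) b (right_mem_Icc.mpr hab) hab
  linear_combination this

section Descent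

variable {E : Type*} [NormedAddCommGroup E] [InnerProductSpace ℝ E] [CompleteSpace E]
  {L : E → ℝ} {grad : E → E} {hess : E → E →L[ℝ] E}

theorem le_add_inner_add_of_inner_hessian_le (hgrad : ∀ x, HasGradientAt L (grad x) x)
    (hhess : ∀ x, HasFDerivAt grad (hess x) x) {x v : E} {M : ℝ}
    (hM : ∀ s ∈ Icc (0 : ℝ) 1, ⟪hess (x + s • v) v, v⟫ ≤ M) :
    L (x + v) ≤ L x + ⟪grad x, v⟫ + M / 2 := by
  have hline : ∀ t : ℝ, HasDerivAt (fun s : ℝ => x + s • v) v t := fun t => by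
    simpa using ((hasDerivAt_id t).smul_const v).const_add x
  have hL : ∀ t : ℝ, HasDerivAt (fun s : ℝ => L (x + s • v)) ⟪grad (x + t • v), v⟫ t := fun t => by
    have := (hgrad (x + t • v)).hasFDerivAt.comp_hasDerivAt t (hline t)
    rw [InnerProductSpace.toDual_apply_apply] at this
    exact this
  have hG : ∀ t : ℝ, HasDerivAt (fun s : ℝ => ⟪grad (x + s • v), v⟫) ⟪hess (x + t • v) v, v⟫ t :=
    fun t => by
      simpa using ((hhess _).comp_hasDerivAt t (hline t)).inner ℝ (hasDerivAt_const t v)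
  simpa using le_add_deriv_mul_add_of_deriv2_le zero_le_one hL hG hM

theorem le_add_inner_add_of_inner_hessian_le_mul (hgrad : ∀ x, HasGradientAt L (grad x) x)
    (hhess : ∀ x, HasFDerivAt grad (hess x) x) {x v : E} {R k : ℝ}
    (hrel : ∀ y, ‖y - x‖ ≤ R → ⟪hess y v, v⟫ ≤ k * ⟪hess x v, v⟫) (hv : ‖v‖ ≤ R) :
    L (x + v) ≤ L x + ⟪grad x, v⟫ + k / 2 * ⟪hess x v, v⟫ := by
  refine (le_add_inner_add_of_inner_hessian_le hgrad hhess fun s hs => hrel _ ?_).trans_eq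
    (by ring)
  rw [add_sub_cancel_left, norm_smul, Real.norm_of_nonneg hs.1]
  exact (mul_le_of_le_one_left (norm_nonneg v) hs.2).trans hv

end Descent

section Loewner

variable {A : Type*} [Ring A] [StarRing A] [PartialOrder A] [StarOrderedRing A]
  [TopologicalSpace A] [Algebra ℝ A] [IsTopologicalRing A] [T2Space A]
  [ContinuousFunctionalCalculus ℝ A IsSelfAdjoint] [NonnegSpectrumClass ℝ A]

theorem le_smul_of_spectrum_inverse_mul_le {a b : A} (ha : IsStrictlyPositive a)
    (hb : IsSelfAdjoint b) {c : ℝ} (h : ∀ x ∈ spectrum ℝ (Ring.inverse a * b), x ≤ c) :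
    b ≤ c • a := by
  obtain ⟨u, hu⟩ := CFC.isUnit_sqrt_iff_isStrictlyPositive.mpr ha
  have huu : (u : A) * u = a := hu ▸ CFC.sqrt_mul_sqrt_self a ha.nonneg
  have hu_sa : IsSelfAdjoint (u : A) := hu ▸ (CFC.sqrt_nonneg a).isSelfAdjoint
  have huinv_sa : IsSelfAdjoint (↑u⁻¹ : A) := Ring.inverse_unit u ▸ hu_sa.ringInverse
  have hle : (↑u⁻¹ * b * ↑u⁻¹ : A) ≤ algebraMap ℝ A c := by
    refine le_algebraMap_of_spectrum_le (fun x hx => h x ?_) ?_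
    · rw [← huu, ← Units.val_mul, Ring.inverse_unit, ← spectrum.units_conjugate (u := u)]
      simpa [mul_assoc] using hx
    · simpa [huinv_sa.star_eq] using hb.conjugate' (↑u⁻¹ : A)
  calc b = u * (↑u⁻¹ * b * ↑u⁻¹) * u := by simp [mul_assoc]
    _ ≤ u * algebraMap ℝ A c * u := hu_sa.conjugate_le_conjugate hle
    _ = c • a := by
      rw [Algebra.algebraMap_eq_smul_one, mul_smul_comm, mul_one, smul_mul_assoc, huu]

end Loewner

namespace Matrix

open scoped MatrixOrder Matrix.Norms.L2Operator

variable {n : Type*} [Fintype n] [DecidableEq n]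

theorem le_l2_opNorm_of_mem_spectrum (M : Matrix n n ℝ) {x : ℝ} (hx : x ∈ spectrum ℝ M) :
    x ≤ ‖M‖ := by
  have h1 : ‖(1 : Matrix n n ℝ)‖ ≤ 1 := by
    rw [← l2_opNorm_toEuclideanCLM, map_one]
    exact ContinuousLinearMap.norm_id_le
  calc x ≤ ‖x‖ := Real.le_norm_self x
    _ ≤ ‖M‖ * ‖(1 : Matrix n n ℝ)‖ := spectrum.norm_le_norm_mul_of_mem hx
    _ ≤ ‖M‖ := mul_le_of_le_one_right (norm_nonneg M) h1

theorem le_smul_of_l2_opNorm_inv_mul_le {H H' : Matrix n n ℝ} (hH : H.PosDef)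
    (hH' : H'.IsHermitian) {c : ℝ} (h : ‖H⁻¹ * H'‖ ≤ c) : H' ≤ c • H :=
  le_smul_of_spectrum_inverse_mul_le hH.isStrictlyPositive hH'
    fun _ hx => (le_l2_opNorm_of_mem_spectrum _ (nonsing_inv_eq_ringInverse H ▸ hx)).trans h

theorem inner_toEuclideanLin_le_of_le {A B : Matrix n n ℝ} (h : A ≤ B) (x : EuclideanSpace ℝ n) :
    ⟪toEuclideanLin A x, x⟫ ≤ ⟪toEuclideanLin B x, x⟫ := by
  have := (isPositive_toEuclideanLin_iff.mpr (le_iff.mp h)).inner_nonneg_left x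
  simpa [map_sub, inner_sub_left] using this

theorem inner_toEuclideanLin_le_of_l2_opNorm_inv_mul_le {H H' : Matrix n n ℝ} (hH : H.PosDef)
    (hH' : H'.IsHermitian) {c : ℝ} (h : ‖H⁻¹ * H'‖ ≤ c) (x : EuclideanSpace ℝ n) :
    ⟪toEuclideanLin H' x, x⟫ ≤ c * ⟪toEuclideanLin H x, x⟫ := by
  simpa [inner_smul_left] using
    inner_toEuclideanLin_le_of_le (le_smul_of_l2_opNorm_inv_mul_le hH hH' h) x

theorem inner_toEuclideanLin_transpose (V : Matrix n n ℝ) (x y : EuclideanSpace ℝ n) :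
    ⟪toEuclideanLin Vᵀ x, y⟫ = ⟪x, toEuclideanLin V y⟫ := by
  rw [← conjTranspose_eq_transpose_of_trivial, toEuclideanLin_conjTranspose_eq_adjoint,
    LinearMap.adjoint_inner_left]

theorem inner_toEuclideanLin_transpose_eq_sum (V : Matrix n n ℝ) (x y : EuclideanSpace ℝ n) :
    ⟪x, toEuclideanLin Vᵀ y⟫ = ∑ i, toEuclideanLin V x i * y i := by
  rw [real_inner_comm, inner_toEuclideanLin_transpose, PiLp.inner_apply]
  simp only [RCLike.inner_apply, conj_trivial]

theorem toEuclideanLin_diagonal_apply (σ : n → ℝ) (x : EuclideanSpace ℝ n) (i : n) :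
    toEuclideanLin (diagonal σ) x i = σ i * x i := by
  simp [toLpLin_apply, mulVec_diagonal]

theorem inner_toEuclideanLin_diagonal (σ : n → ℝ) (x : EuclideanSpace ℝ n) :
    ⟪toEuclideanLin (diagonal σ) x, x⟫ = ∑ i, σ i * x i ^ 2 := by
  simp [PiLp.inner_apply, toEuclideanLin_diagonal_apply, sq, mul_left_comm]

section Orthogonal

variable {V : Matrix n n ℝ} (hV : V ∈ orthogonalGroup n ℝ)
include hV

theorem inner_toEuclideanLin_transpose_transpose (x y : EuclideanSpace ℝ n) :
    ⟪toEuclideanLin Vᵀ x, toEuclideanLin Vᵀ y⟫ = ⟪x, y⟫ := by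
  rw [inner_toEuclideanLin_transpose, ← LinearMap.comp_apply, ← toLpLin_mul_same,
    (mem_orthogonalGroup_iff n ℝ).mp hV, toLpLin_one, LinearMap.id_apply]

theorem norm_toEuclideanLin_transpose (x : EuclideanSpace ℝ n) :
    ‖toEuclideanLin Vᵀ x‖ = ‖x‖ := by
  rw [← sq_eq_sq₀ (norm_nonneg _) (norm_nonneg _), ← real_inner_self_eq_norm_sq,
    inner_toEuclideanLin_transpose_transpose hV, real_inner_self_eq_norm_sq]

variable {σ : n → ℝ}

theorem inner_toEuclideanLin_conj_diagonal (x : EuclideanSpace ℝ n) :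
    ⟪toEuclideanLin (Vᵀ * diagonal σ * V) (toEuclideanLin Vᵀ x), toEuclideanLin Vᵀ x⟫ =
      ∑ i, σ i * x i ^ 2 := by
  have : Vᵀ * diagonal σ * V * Vᵀ = Vᵀ * diagonal σ := by
    rw [mul_assoc, (mem_orthogonalGroup_iff n ℝ).mp hV, mul_one]
  rw [← LinearMap.comp_apply, ← toLpLin_mul_same, this, toLpLin_mul_same, LinearMap.comp_apply,
    inner_toEuclideanLin_transpose_transpose hV, inner_toEuclideanLin_diagonal]

theorem pos_of_posDef_transpose_mul_diagonal_mul (h : (Vᵀ * diagonal σ * V).PosDef) (i : n) :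
    0 < σ i := by
  rw [← conjTranspose_eq_transpose_of_trivial, ← star_eq_conjTranspose,
    IsUnit.posDef_star_left_conjugate_iff (Unitary.isUnit_coe (U := ⟨V, hV⟩)),
    posDef_diagonal_iff] at h
  exact h i

theorem toEuclideanLin_mul_inv_apply (h : (Vᵀ * diagonal σ * V).PosDef)
    (x : EuclideanSpace ℝ n) (i : n) :
    toEuclideanLin V (toEuclideanLin (Vᵀ * diagonal σ * V)⁻¹ x) i =
      (σ i)⁻¹ * toEuclideanLin V x i := by
  have hVH : V * (Vᵀ * diagonal σ * V) = diagonal σ * V := by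
    rw [← mul_assoc, ← mul_assoc, (mem_orthogonalGroup_iff n ℝ).mp hV, one_mul]
  have hDV : diagonal σ * V * (Vᵀ * diagonal σ * V)⁻¹ = V := by
    rw [← hVH, mul_assoc, mul_nonsing_inv _ ((isUnit_iff_isUnit_det _).mp h.isUnit), mul_one]
  have hi := congr($(congr(toEuclideanLin $hDV x)) i)
  rw [toLpLin_mul_same, toLpLin_mul_same, LinearMap.comp_apply, LinearMap.comp_apply,
    toEuclideanLin_diagonal_apply] at hi
  rw [eq_inv_mul_iff_mul_eq₀ (pos_of_posDef_transpose_mul_diagonal_mul hV h i).ne', hi]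

end Orthogonal

end Matrix

theorem mul_clip_eq_min {ρ t : ℝ} (hρ : 0 ≤ ρ) :
    t * max (min t ρ) (-ρ) = min (ρ * |t|) (t ^ 2) := by
  simp only [max_def, min_def, abs_eq_max_neg]
  split_ifs <;> nlinarith

theorem sq_clip_le_mul_clip {ρ t : ℝ} (hρ : 0 ≤ ρ) :
    max (min t ρ) (-ρ) ^ 2 ≤ t * max (min t ρ) (-ρ) := by
  simp only [max_def, min_def]
  split_ifs <;> nlinarith

theorem mul_clip_inv_mul_eq_min {s ρ u : ℝ} (hs : 0 < s) (hρ : 0 ≤ ρ) :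
    u * max (min (s⁻¹ * u) ρ) (-ρ) = min (ρ * |u|) (s⁻¹ * |u| ^ 2) := by
  obtain ⟨t, rfl⟩ : ∃ t, u = s * t := ⟨s⁻¹ * u, by field_simp⟩
  rw [inv_mul_cancel_left₀ hs.ne', mul_assoc, mul_clip_eq_min hρ, mul_min_of_nonneg _ _ hs.le,
    abs_mul, abs_of_pos hs]
  congr 1
  · ring
  · field_simp
    rw [sq_abs]

theorem mul_sq_clip_inv_mul_le {s ρ u : ℝ} (hs : 0 < s) (hρ : 0 ≤ ρ) :
    s * max (min (s⁻¹ * u) ρ) (-ρ) ^ 2 ≤ u * max (min (s⁻¹ * u) ρ) (-ρ) := by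
  obtain ⟨t, rfl⟩ : ∃ t, u = s * t := ⟨s⁻¹ * u, by field_simp⟩
  rw [inv_mul_cancel_left₀ hs.ne', mul_assoc]
  exact mul_le_mul_of_nonneg_left (sq_clip_le_mul_clip hρ) hs.le

theorem clipVec_apply {d : ℕ} (ρ : ℝ) (z : EuclideanSpace ℝ (Fin d)) (i : Fin d) :
    clipVec ρ z i = max (min (z i) ρ) (-ρ) :=
  rfl

theorem norm_clipVec_le {d : ℕ} {ρ : ℝ} (hρ : 0 ≤ ρ) (z : EuclideanSpace ℝ (Fin d)) :
    ‖clipVec ρ z‖ ≤ ρ * √d := by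
  have hi : ∀ i, ‖clipVec ρ z i‖ ^ 2 ≤ ρ ^ 2 := fun i => by
    rw [Real.norm_eq_abs, sq_abs, clipVec_apply]
    exact sq_le_sq' (le_max_right _ _) (max_le (min_le_right _ _) (by linarith))
  calc ‖clipVec ρ z‖ = √(∑ i, ‖clipVec ρ z i‖ ^ 2) := EuclideanSpace.norm_eq _
    _ ≤ √(∑ _i : Fin d, ρ ^ 2) := Real.sqrt_le_sqrt (Finset.sum_le_sum fun i _ => hi i)
    _ = ρ * √d := by
      rw [Finset.sum_const, Finset.card_univ, Fintype.card_fin, nsmul_eq_mul,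
        Real.sqrt_mul (Nat.cast_nonneg d), Real.sqrt_sq hρ, mul_comm]

theorem norm_smul_clipVec_le {d : ℕ} {η ρ R : ℝ} (hη : 0 < η) (hρ : 0 < ρ)
    (h : η * ρ ≤ R / √d) (z : EuclideanSpace ℝ (Fin d)) : ‖η • clipVec ρ z‖ ≤ R := by
  have hd : 0 < √(d : ℝ) := by
    -- for `d = 0` the hypothesis reads `η * ρ ≤ R / 0 = 0`
    by_contra! hd
    rw [le_antisymm hd (Real.sqrt_nonneg _), div_zero] at h
    exact (mul_pos hη hρ).not_ge h
  rw [norm_smul, Real.norm_of_nonneg hη.le]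
  calc η * ‖clipVec ρ z‖ ≤ η * (ρ * √d) := by gcongr; exact norm_clipVec_le hρ.le z
    _ = η * ρ * √d := by ring
    _ ≤ R := (le_div_iff₀ hd).mp h

theorem sophia_descent_lemma_general
    (d : ℕ)
    (L : EuclideanSpace ℝ (Fin d) → ℝ)
    (grad : EuclideanSpace ℝ (Fin d) → EuclideanSpace ℝ (Fin d))
    (hess : EuclideanSpace ℝ (Fin d) → Matrix (Fin d) (Fin d) ℝ)
    (hgrad : ∀ θ, HasGradientAt L (grad θ) θ)
    (hhess : ∀ θ, HasFDerivAt grad ((Matrix.toEuclideanLin (hess θ)).toContinuousLinearMap) θ)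
    (hpd : ∀ θ, (hess θ).PosDef)
    (R : ℝ)
    (hhessLip : ∀ θ θ' : EuclideanSpace ℝ (Fin d), ‖θ - θ'‖ ≤ R →
      ‖(Matrix.toEuclideanLin ((hess θ')⁻¹ * hess θ)).toContinuousLinearMap‖ ≤ 2)
    (θ : EuclideanSpace ℝ (Fin d))
    (η ρ : ℝ) (hη : 0 < η) (hρ : 0 < ρ) (hηρ : η * ρ ≤ R / Real.sqrt d)
    (V : Matrix (Fin d) (Fin d) ℝ) (hV : V ∈ Matrix.orthogonalGroup (Fin d) ℝ)
    (σ : Fin d → ℝ)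
    (hdecomp : hess θ = Vᵀ * Matrix.diagonal σ * V) :
    L (θ - η • Matrix.toEuclideanLin Vᵀ
        (clipVec ρ (Matrix.toEuclideanLin V (Matrix.toEuclideanLin (hess θ)⁻¹ (grad θ)))))
      - L θ ≤
    -(η - η ^ 2) * ∑ i, min (ρ * |Matrix.toEuclideanLin V (grad θ) i|)
        ((σ i)⁻¹ * |Matrix.toEuclideanLin V (grad θ) i| ^ 2) := by
  have hH : (Vᵀ * diagonal σ * V).PosDef := hdecomp ▸ hpd θ
  have hσ := pos_of_posDef_transpose_mul_diagonal_mul hV hH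
  set u := toEuclideanLin V (grad θ)
  set c := clipVec ρ (toEuclideanLin V (toEuclideanLin (hess θ)⁻¹ (grad θ)))
  have hc : ∀ i, c i = max (min ((σ i)⁻¹ * u i) ρ) (-ρ) := fun i => by
    rw [clipVec_apply, hdecomp, toEuclideanLin_mul_inv_apply hV hH]
  set v := -(η • toEuclideanLin Vᵀ c)
  have hv : ‖v‖ ≤ R := by
    rw [norm_neg, ← map_smul, norm_toEuclideanLin_transpose hV]
    exact norm_smul_clipVec_le hη hρ hηρ _
  have hdesc := le_add_inner_add_of_inner_hessian_le_mul (k := 2) hgrad hhess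
    (fun y hy => inner_toEuclideanLin_le_of_l2_opNorm_inv_mul_le (hpd θ) (hpd y).isHermitian
      (hhessLip y θ hy) _) hv
  have hgrad_v : ⟪grad θ, v⟫ = -(η * ∑ i, u i * c i) := by
    rw [inner_neg_right, inner_smul_right, inner_toEuclideanLin_transpose_eq_sum]
  have hhess_v : ⟪toEuclideanLin (hess θ) v, v⟫ = η ^ 2 * ∑ i, σ i * c i ^ 2 := by
    rw [map_neg, inner_neg_neg, map_smul, inner_smul_left, inner_smul_right, hdecomp,
      inner_toEuclideanLin_conj_diagonal hV]
    simp only [Real.ringHom_apply]; ring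
  have hsum : ∑ i, σ i * c i ^ 2 ≤ ∑ i, u i * c i :=
    Finset.sum_le_sum fun i _ => hc i ▸ mul_sq_clip_inv_mul_le (hσ i) hρ.le
  have hsum_min : ∑ i, u i * c i = ∑ i, min (ρ * |u i|) ((σ i)⁻¹ * |u i| ^ 2) :=
    Finset.sum_congr rfl fun i _ => hc i ▸ mul_clip_inv_mul_eq_min (hσ i) hρ.le
  rw [LinearMap.coe_toContinuousLinearMap', hgrad_v, hhess_v, ← sub_eq_add_neg] at hdesc
  have hquad := mul_le_mul_of_nonneg_left hsum (sq_nonneg η)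
  rw [← hsum_min]
  linarith

/-- Descent lemma for the clipped Newton update. -/
theorem sophia_descent_lemma
    (d : ℕ)
    (L : EuclideanSpace ℝ (Fin d) → ℝ)
    (grad : EuclideanSpace ℝ (Fin d) → EuclideanSpace ℝ (Fin d))
    (hess : EuclideanSpace ℝ (Fin d) → Matrix (Fin d) (Fin d) ℝ)
    (hC2 : ContDiff ℝ 2 L)
    (hgrad : ∀ θ, HasGradientAt L (grad θ) θ)
    (hhess : ∀ θ, HasFDerivAt grad ((Matrix.toEuclideanLin (hess θ)).toContinuousLinearMap) θ)
    (hconv : StrictConvexOn ℝ Set.univ L)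
    (hpd : ∀ θ, (hess θ).PosDef)
    (θstar : EuclideanSpace ℝ (Fin d))
    (hmin : ∀ θ, L θstar ≤ L θ)
    (R : ℝ) (hR : 0 < R)
    (hhessLip : ∀ θ θ' : EuclideanSpace ℝ (Fin d), ‖θ - θ'‖ ≤ R →
      ‖(Matrix.toEuclideanLin ((hess θ')⁻¹ * hess θ)).toContinuousLinearMap‖ ≤ 2)
    (θ : EuclideanSpace ℝ (Fin d))
    (η ρ : ℝ) (hη : 0 < η) (hρ : 0 < ρ) (hηρ : η * ρ ≤ R / Real.sqrt d)
    (V : Matrix (Fin d) (Fin d) ℝ) (hV : V ∈ Matrix.orthogonalGroup (Fin d) ℝ)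
    (σ : Fin d → ℝ)
    (hdecomp : hess θ = Vᵀ * Matrix.diagonal σ * V) :
    L (θ - η • Matrix.toEuclideanLin Vᵀ
        (clipVec ρ (Matrix.toEuclideanLin V (Matrix.toEuclideanLin (hess θ)⁻¹ (grad θ)))))
      - L θ ≤
    -(η - η ^ 2) * ∑ i, min (ρ * |Matrix.toEuclideanLin V (grad θ) i|)
        ((σ i)⁻¹ * |Matrix.toEuclideanLin V (grad θ) i| ^ 2) :=
  sophia_descent_lemma_general d L grad hess hgrad hhess hpd R hhessLip θ η ρ hη hρ hηρ V hV σ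
    hdecomp
end
end
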